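/- arXiv:2011.02453 — 4 statements merged into one kernel-verified Lean document; each statement's English description precedes it below -/
import Mathlib

section
/- Let H be a d×d real symmetric positive definite matrix, Q a d×r real matrix, K an r×r real symmetric matrix, and μ ≥ 0 a real number. If μ·ρ(K Qᵀ H⁻¹ Q) < 1, then the matrix H − μ·Q K Qᵀ is positive definite. -/
open Matrix

/-- Spectral radius of a real square matrix: the maximum modulus of its eigenvalues
viewed as a complex matrix (`0` if there are none). -/
noncomputable def specRad {n : Type*} [Fintype n] [DecidableEq n]
    (A : Matrix n n ℝ) : ℝ :=
  sSup ((fun z : ℂ => ‖z‖) '' spectrum ℂ (A.map (algebraMap ℝ ℂ)))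

/-!
With `S = √H`, we have `H - μ C = S (1 - μ B) S` for the symmetric matrix `B = S⁻¹ C S⁻¹`,
which is similar to `H⁻¹ C`. So `H - μ C` is positive definite as soon as `μ t < 1` on the
spectrum of `H⁻¹ C`. Since `H⁻¹ C = (H⁻¹ Q)(K Qᵀ)`, its nonzero eigenvalues are eigenvalues of
`K Qᵀ H⁻¹ Q`, hence at most `ρ(K Qᵀ H⁻¹ Q)`; the others are `≤ 0`, where `μ t < 1` is trivial.
-/

namespace Matrix

variable {m n : Type*} [Fintype m] [Fintype n] [DecidableEq m] [DecidableEq n]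

theorem mem_spectrum_mul_comm_of_ne_zero {K : Type*} [Field K] (A : Matrix m n K)
    (B : Matrix n m K) {t : K} (ht : t ≠ 0) (h : t ∈ spectrum K (A * B)) :
    t ∈ spectrum K (B * A) := by
  rw [mem_spectrum_iff_isRoot_charpoly, Polynomial.IsRoot.def] at h ⊢
  have := congrArg (Polynomial.eval t) (charpoly_mul_comm' A B)
  simp only [Polynomial.eval_mul, Polynomial.eval_pow, Polynomial.eval_X, h, mul_zero] at this
  exact (mul_eq_zero.mp this.symm).resolve_left (pow_ne_zero _ ht)

theorem map_mem_spectrum_map {K L : Type*} [Field K] [Field L] (f : K →+* L)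
    {A : Matrix n n K} {t : K} (h : t ∈ spectrum K A) : f t ∈ spectrum L (A.map f) := by
  rw [mem_spectrum_iff_isRoot_charpoly] at h ⊢
  rw [charpoly_map]
  exact h.map

end Matrix

theorem le_specRad {n : Type*} [Fintype n] [DecidableEq n] {A : Matrix n n ℝ} {t : ℝ}
    (h : t ∈ spectrum ℝ A) : t ≤ specRad A := by
  have hbdd : BddAbove ((fun z : ℂ => ‖z‖) '' spectrum ℂ (A.map (algebraMap ℝ ℂ))) :=
    ((Matrix.finite_spectrum _).image _).bddAbove
  calc t ≤ ‖(t : ℂ)‖ := by rw [Complex.norm_real]; exact Real.le_norm_self t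
    _ ≤ specRad A := le_csSup hbdd ⟨_, Matrix.map_mem_spectrum_map _ h, rfl⟩

theorem IsSelfAdjoint.isStrictlyPositive_one_sub_smul {A : Type*} [TopologicalSpace A] [Ring A]
    [StarRing A] [PartialOrder A] [StarOrderedRing A] [Algebra ℝ A]
    [ContinuousFunctionalCalculus ℝ A IsSelfAdjoint] [NonnegSpectrumClass ℝ A] {a : A}
    (ha : IsSelfAdjoint a) {μ : ℝ} (h : ∀ t ∈ spectrum ℝ a, μ * t < 1) :
    IsStrictlyPositive (1 - μ • a) := by
  have hcfc : cfc (fun x => 1 - μ * x) a = 1 - μ • a := by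
    rw [cfc_sub (fun _ => 1) (fun x => μ * x) a, cfc_const_one ℝ a, cfc_const_mul_id μ a]
  rw [← hcfc, cfc_isStrictlyPositive_iff _ a]
  intro t ht
  linarith [h t ht]

open scoped MatrixOrder in
theorem Matrix.PosDef.sub_smul_of_forall_mem_spectrum {n : Type*} [Fintype n] [DecidableEq n]
    {H C : Matrix n n ℝ} (hH : H.PosDef) (hC : C.IsHermitian) {μ : ℝ}
    (h : ∀ t ∈ spectrum ℝ (H⁻¹ * C), μ * t < 1) : (H - μ • C).PosDef := by
  set S := CFC.sqrt H
  have hS : IsStrictlyPositive S := hH.isStrictlyPositive.sqrt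
  have hSS : S * S = H := CFC.sqrt_mul_sqrt_self H
  have hSdet : IsUnit S.det := (isUnit_iff_isUnit_det S).mp hS.isUnit
  have hSinvS : S * S⁻¹ = 1 := mul_nonsing_inv S hSdet
  have hSSinv : S⁻¹ * S = 1 := nonsing_inv_mul S hSdet
  set B := S⁻¹ * C * S⁻¹
  have hB : IsSelfAdjoint B := by
    simpa only [(IsHermitian.inv hS.isSelfAdjoint).star_eq] using IsSelfAdjoint.conjugate hC S⁻¹
  have hBspec : spectrum ℝ B = spectrum ℝ (H⁻¹ * C) := by
    set u := hS.isUnit.unit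
    have hconj : B = u * (H⁻¹ * C) * ((u⁻¹ : (Matrix n n ℝ)ˣ) : Matrix n n ℝ) := by
      rw [coe_units_inv, IsUnit.unit_spec, ← hSS, mul_inv_rev]
      simp only [← Matrix.mul_assoc, hSinvS, one_mul, B]
    rw [hconj, spectrum.units_conjugate]
  have hfactor : H - μ • C = S * (1 - μ • B) * S := by
    have hSBS : S * B * S = C := by
      rw [Matrix.mul_assoc, Matrix.mul_assoc, hSSinv, Matrix.mul_one, ← Matrix.mul_assoc, hSinvS,
        Matrix.one_mul]
    rw [Matrix.mul_sub, Matrix.sub_mul, Matrix.mul_one, hSS, Matrix.mul_smul, Matrix.smul_mul, hSBS]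
  rw [← isStrictlyPositive_iff_posDef, hfactor,
    hS.isUnit.isStrictlyPositive_iff_conjugate_of_isSelfAdjoint _ _ hS.isSelfAdjoint]
  exact hB.isStrictlyPositive_one_sub_smul (hBspec ▸ h)

theorem stmt0 {d r : ℕ} (H : Matrix (Fin d) (Fin d) ℝ) (Q : Matrix (Fin d) (Fin r) ℝ)
    (K : Matrix (Fin r) (Fin r) ℝ) (μ : ℝ)
    (hH : H.PosDef) (hK : K.IsSymm) (hμ : 0 ≤ μ)
    (hspec : μ * specRad (K * Qᵀ * H⁻¹ * Q) < 1) :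
    (H - μ • (Q * K * Qᵀ)).PosDef := by
  have hC : (Q * K * Qᵀ).IsHermitian := by
    simpa only [conjTranspose_eq_transpose_of_trivial] using
      isHermitian_mul_mul_conjTranspose Q (isHermitian_iff_isSymm.mpr hK)
  refine hH.sub_smul_of_forall_mem_spectrum hC fun t ht => ?_
  rcases le_or_gt t 0 with ht0 | ht0
  · nlinarith
  have ht' : t ∈ spectrum ℝ (K * Qᵀ * H⁻¹ * Q) := by
    have := mem_spectrum_mul_comm_of_ne_zero (H⁻¹ * Q) (K * Qᵀ) ht0.ne'
      (by simpa only [Matrix.mul_assoc] using ht)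
    simpa only [Matrix.mul_assoc] using this
  calc μ * t ≤ μ * specRad (K * Qᵀ * H⁻¹ * Q) := mul_le_mul_of_nonneg_left (le_specRad ht') hμ
    _ < 1 := hspec
end

section
/- Let H be a d×d real symmetric positive definite matrix, x ∈ ℝᵈ, and define f(z) = ½(z − x)ᵀH(z − x). Let Θ : ℝᵈ → ℝ be twice continuously differentiable and let Θᵐᵃˣ ∈ ℝ. Suppose x⋆ ∈ ℝᵈ and μ⋆ ≥ 0 satisfy: (i) stationarity H(x⋆ − x) = μ⋆·∇Θ(x⋆); (ii) feasibility Θ(x⋆) = Θᵐᵃˣ; (iii) the Hessian of Θ at x⋆ factors as ∇²Θ(x⋆) = Q K Qᵀ for a d×r real matrix Q and an r×r real symmetric matrix K; and (iv) the spectral inequality μ⋆·ρ(K Qᵀ H⁻¹ Q) < 1. Then x⋆ is a strict local minimizer of f on the set {z ∈ ℝᵈ : Θ(z) = Θᵐᵃˣ}. -/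
/-!
On the constraint set, `f` differs from the Lagrangian `L = f - μ⋆ Θ` by a constant, and by (i)
`L` is critical at `x⋆`. Its second-order Taylor expansion there has quadratic part
`½ hᵀ (H - μ⋆ Q K Qᵀ) h`. Writing `H = S²`, the nonzero eigenvalues of `S⁻¹ Q K Qᵀ S⁻¹` are
those of `K Qᵀ H⁻¹ Q`, so `Q K Qᵀ ≤ ρ(K Qᵀ H⁻¹ Q) • H` in the Loewner order. By (iv) the quadratic
part is then bounded below by a positive multiple of `‖h‖²`, which beats the `o(‖h‖²)` remainder.
-/

open Matrix

open Set Filter Topology Asymptotics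
open scoped MatrixOrder

theorem abs_sub_taylor_two_le {φ φ' φ'' : ℝ → ℝ} (hφ : ∀ t, HasDerivAt φ (φ' t) t)
    (hφ' : ∀ t, HasDerivAt φ' (φ'' t) t) {C : ℝ}
    (hC : ∀ t ∈ Icc (0 : ℝ) 1, |φ'' t - φ'' 0| ≤ C) :
    |φ 1 - φ 0 - φ' 0 - φ'' 0 / 2| ≤ C := by
  set ψ : ℝ → ℝ := fun t => φ t - t * φ' 0 - t ^ 2 / 2 * φ'' 0
  set ψ' : ℝ → ℝ := fun t => φ' t - φ' 0 - t * φ'' 0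
  have hψ : ∀ t, HasDerivAt ψ (ψ' t) t := fun t => by
    refine (((hφ t).sub ((hasDerivAt_id' t).mul_const (φ' 0))).sub
      (((hasDerivAt_pow 2 t).div_const 2).mul_const (φ'' 0))).congr_deriv ?_
    simp [ψ']
  have hψ' : ∀ t, HasDerivAt ψ' (φ'' t - φ'' 0) t := fun t => by
    refine (((hφ' t).sub_const (φ' 0)).sub
      ((hasDerivAt_id' t).mul_const (φ'' 0))).congr_deriv ?_
    ring
  obtain ⟨ξ, hξ, hψξ⟩ := exists_hasDerivAt_eq_slope ψ ψ' one_pos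
    (fun t _ => (hψ t).continuousAt.continuousWithinAt) fun t _ => hψ t
  obtain ⟨η, hη, hψ'η⟩ := exists_hasDerivAt_eq_slope ψ' (fun t => φ'' t - φ'' 0) hξ.1
    (fun t _ => (hψ' t).continuousAt.continuousWithinAt) fun t _ => hψ' t
  rw [sub_zero, div_one] at hψξ
  rw [sub_zero, eq_div_iff hξ.1.ne'] at hψ'η
  have hrem : φ 1 - φ 0 - φ' 0 - φ'' 0 / 2 = ξ * (φ'' η - φ'' 0) := by
    calc _ = ψ 1 - ψ 0 := by simp only [ψ]; ring
      _ = ψ' ξ - ψ' 0 := by simp only [← hψξ, ψ']; ring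
      _ = _ := by rw [← hψ'η, mul_comm]
  rw [hrem, abs_mul, abs_of_pos hξ.1]
  calc ξ * |φ'' η - φ'' 0| ≤ 1 * C :=
        mul_le_mul hξ.2.le (hC η ⟨hη.1.le, (hη.2.trans hξ.2).le⟩) (abs_nonneg _) zero_le_one
    _ = C := one_mul C

section NormedSpace

variable {E F : Type*} [NormedAddCommGroup E] [NormedSpace ℝ E] [NormedAddCommGroup F]
  [NormedSpace ℝ F]

theorem HasFDerivAt.hasDerivAt_comp_add_smul {g : E → F} {g' : E →L[ℝ] F} {x h : E} {t : ℝ}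
    (hg : HasFDerivAt g g' (x + t • h)) :
    HasDerivAt (fun s : ℝ => g (x + s • h)) (g' h) t := by
  have := hg.comp_hasDerivAt t (((hasDerivAt_id' t).smul_const h).const_add x)
  rwa [one_smul] at this

theorem HasFDerivAt.hasDerivAt_apply_comp_add_smul {g : E → E →L[ℝ] F}
    {g' : E →L[ℝ] E →L[ℝ] F} {x h : E} {t : ℝ} (hg : HasFDerivAt g g' (x + t • h)) :
    HasDerivAt (fun s : ℝ => g (x + s • h) h) (g' h h) t := by
  have := hg.hasDerivAt_comp_add_smul.clm_apply (hasDerivAt_const t h)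
  rwa [map_zero, add_zero] at this

theorem ContDiff.isLittleO_taylor_two {g : E → ℝ} (hg : ContDiff ℝ 2 g) (x : E) :
    (fun h => g (x + h) - g x - fderiv ℝ g x h - fderiv ℝ (fderiv ℝ g) x h h / 2)
      =o[𝓝 0] fun h => ‖h‖ ^ 2 := by
  have hg' : ContDiff ℝ 1 (fderiv ℝ g) := hg.fderiv_right (by norm_num)
  have hD : ∀ y, HasFDerivAt g (fderiv ℝ g y) y := fun y =>
    ((hg.differentiable two_ne_zero) y).hasFDerivAt
  have hD2 : ∀ y, HasFDerivAt (fderiv ℝ g) (fderiv ℝ (fderiv ℝ g) y) y := fun y =>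
    ((hg'.differentiable one_ne_zero) y).hasFDerivAt
  refine isLittleO_iff.2 fun ε hε => ?_
  obtain ⟨δ, hδ, hclose⟩ := Metric.continuousAt_iff.1
    ((hg'.continuous_fderiv one_ne_zero).continuousAt (x := x)) ε hε
  filter_upwards [Metric.ball_mem_nhds 0 hδ] with h hh
  rw [Real.norm_eq_abs, norm_pow, norm_norm]
  have hline := abs_sub_taylor_two_le (φ := fun t => g (x + t • h))
    (fun t => (hD _).hasDerivAt_comp_add_smul)
    (fun t => (hD2 _).hasDerivAt_apply_comp_add_smul)
    (C := ε * ‖h‖ ^ 2) fun t ht => ?_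
  · simpa using hline
  have hnear : ‖x + t • h - x‖ < δ := by
    rw [add_sub_cancel_left, norm_smul, Real.norm_of_nonneg ht.1]
    simpa using (mul_le_of_le_one_left (norm_nonneg h) ht.2).trans_lt (mem_ball_zero_iff.1 hh)
  rw [← Real.norm_eq_abs, zero_smul, add_zero, ← _root_.sub_apply, ← _root_.sub_apply]
  calc _ ≤ ‖fderiv ℝ (fderiv ℝ g) (x + t • h) - fderiv ℝ (fderiv ℝ g) x‖ * ‖h‖ * ‖h‖ :=
        ContinuousLinearMap.le_opNorm₂ _ _ _
    _ ≤ ε * ‖h‖ ^ 2 := by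
        rw [mul_assoc, ← sq]
        gcongr
        simpa only [dist_eq_norm] using (hclose (by rwa [dist_eq_norm])).le

end NormedSpace

theorem eventually_lt_of_isLittleO_of_coercive {E : Type*} [NormedAddCommGroup E]
    {g q : E → ℝ} {x : E} {c : ℝ} (hc : 0 < c) (hq : ∀ h, c * ‖h‖ ^ 2 ≤ q h)
    (hg : (fun h => g (x + h) - g x - q h) =o[𝓝 0] fun h => ‖h‖ ^ 2) :
    ∀ᶠ z in 𝓝 x, z ≠ x → g x < g z := by
  have hsub : Tendsto (fun z => z - x) (𝓝 x) (𝓝 0) := tendsto_sub_nhds_zero_iff.2 tendsto_id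
  filter_upwards [hsub.eventually (hg.def (half_pos hc))] with z hz hne
  have hpos : 0 < ‖z - x‖ ^ 2 := pow_pos (norm_pos_iff.2 (sub_ne_zero.2 hne)) 2
  rw [add_sub_cancel, Real.norm_eq_abs, norm_pow, norm_norm] at hz
  nlinarith [abs_le.1 hz, hq (z - x)]

theorem specRad_nonneg {n : Type*} [Fintype n] [DecidableEq n] (A : Matrix n n ℝ) :
    0 ≤ specRad A :=
  Real.sSup_nonneg (by rintro _ ⟨z, _, rfl⟩; exact norm_nonneg z)

theorem abs_le_specRad {n : Type*} [Fintype n] [DecidableEq n] {A : Matrix n n ℝ} {t : ℝ}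
    (ht : t ∈ spectrum ℝ A) : |t| ≤ specRad A := by
  have hC : (t : ℂ) ∈ spectrum ℂ (A.map (algebraMap ℝ ℂ)) := by
    rw [mem_spectrum_iff_isRoot_charpoly] at ht ⊢
    rw [charpoly_map]
    exact ht.map
  have hbdd := ((A.map (algebraMap ℝ ℂ)).finite_spectrum.image fun z : ℂ => ‖z‖).bddAbove
  simpa [specRad] using le_csSup hbdd ⟨_, hC, rfl⟩

namespace Matrix

variable {m n : Type*} [Fintype m] [Fintype n]

theorem mem_spectrum_mul_comm [DecidableEq m] [DecidableEq n] {K : Type*} [Field K]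
    (A : Matrix m n K) (B : Matrix n m K) {t : K} (ht : t ≠ 0) (h : t ∈ spectrum K (A * B)) :
    t ∈ spectrum K (B * A) := by
  rw [mem_spectrum_iff_isRoot_charpoly] at h ⊢
  have := congrArg (Polynomial.eval t) (charpoly_mul_comm' A B)
  simp only [Polynomial.eval_mul, Polynomial.eval_pow, Polynomial.eval_X, h.eq_zero,
    mul_zero] at this
  exact (mul_eq_zero.1 this.symm).resolve_left (pow_ne_zero _ ht)

theorem IsSymm.add_dotProduct_mulVec_add {R : Type*} [CommRing R] {H : Matrix n n R}
    (hH : H.IsSymm) (a h : n → R) :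
    (a + h) ⬝ᵥ H *ᵥ (a + h) = a ⬝ᵥ H *ᵥ a + 2 * (H *ᵥ a ⬝ᵥ h) + h ⬝ᵥ H *ᵥ h := by
  have hswap : a ⬝ᵥ H *ᵥ h = H *ᵥ a ⬝ᵥ h := by
    rw [dotProduct_mulVec, ← vecMul_transpose, hH.eq]
  rw [mulVec_add, dotProduct_add, add_dotProduct, add_dotProduct, hswap,
    dotProduct_comm h (H *ᵥ a)]
  ring

theorem dotProduct_mulVec_le_of_le {A B : Matrix n n ℝ} (hAB : A ≤ B) (v : n → ℝ) :
    v ⬝ᵥ A *ᵥ v ≤ v ⬝ᵥ B *ᵥ v := by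
  have := (le_iff.1 hAB).dotProduct_mulVec_nonneg v
  rw [sub_mulVec, dotProduct_sub, star_trivial] at this
  linarith

theorem sq_norm_le_dotProduct_self (v : n → ℝ) : ‖v‖ ^ 2 ≤ v ⬝ᵥ v := by
  have hsq : ‖v‖ ≤ √(v ⬝ᵥ v) := by
    refine (pi_norm_le_iff_of_nonneg (Real.sqrt_nonneg _)).2 fun i => ?_
    rw [Real.norm_eq_abs]
    refine Real.abs_le_sqrt ?_
    simpa [dotProduct, sq] using
      Finset.single_le_sum (fun j _ => mul_self_nonneg (v j)) (Finset.mem_univ i)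
  calc ‖v‖ ^ 2 ≤ √(v ⬝ᵥ v) ^ 2 := by gcongr
    _ = v ⬝ᵥ v := Real.sq_sqrt (dotProduct_self_star_nonneg v)

theorem PosDef.exists_pos_mul_sq_norm_le [DecidableEq n] {H : Matrix n n ℝ} (hH : H.PosDef) :
    ∃ c > 0, ∀ v : n → ℝ, c * ‖v‖ ^ 2 ≤ v ⬝ᵥ H *ᵥ v := by
  cases isEmpty_or_nonempty n
  · exact ⟨1, one_pos, fun v => by simp [Subsingleton.elim v 0]⟩
  obtain ⟨c, hc, hcH⟩ := (CFC.exists_pos_algebraMap_le_iff hH.isHermitian).2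
    fun t ht => hH.isStrictlyPositive.spectrum_pos ht
  refine ⟨c, hc, fun v => ?_⟩
  calc c * ‖v‖ ^ 2 ≤ c * (v ⬝ᵥ v) := by gcongr; exact sq_norm_le_dotProduct_self v
    _ = v ⬝ᵥ algebraMap ℝ (Matrix n n ℝ) c *ᵥ v := by
      rw [Algebra.algebraMap_eq_smul_one, smul_mulVec, one_mulVec, dotProduct_smul, smul_eq_mul]
    _ ≤ v ⬝ᵥ H *ᵥ v := dotProduct_mulVec_le_of_le hcH v

theorem PosDef.mul_mul_transpose_le_specRad_smul [DecidableEq m] [DecidableEq n]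
    {H : Matrix n n ℝ} (hH : H.PosDef) (Q : Matrix n m ℝ) {K : Matrix m m ℝ} (hK : K.IsSymm) :
    Q * K * Qᵀ ≤ specRad (K * Qᵀ * H⁻¹ * Q) • H := by
  set S := CFC.sqrt H
  have hS : 0 ≤ S := CFC.sqrt_nonneg H
  have hSS : S * S = H := CFC.sqrt_mul_sqrt_self H hH.posSemidef.nonneg
  have hSdet : IsUnit S.det :=
    (isUnit_iff_isUnit_det S).1 ((CFC.isUnit_sqrt_iff H hH.posSemidef.nonneg).2 hH.isUnit)
  have hstar : star S⁻¹ = S⁻¹ := by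
    rw [star_eq_conjTranspose, conjTranspose_nonsing_inv, ← star_eq_conjTranspose,
      (IsSelfAdjoint.of_nonneg hS).star_eq]
  set B := S⁻¹ * (Q * K * Qᵀ) * S⁻¹
  have hB : IsSelfAdjoint B := by
    have hK' : K.IsHermitian := by
      rw [IsHermitian, conjTranspose_eq_transpose_of_trivial, hK.eq]
    have hA : IsSelfAdjoint (Q * K * Qᵀ) := by
      have := isHermitian_mul_mul_conjTranspose Q hK'
      rwa [conjTranspose_eq_transpose_of_trivial] at this
    simpa only [hstar] using hA.conjugate S⁻¹
  have hspec : ∀ t ∈ spectrum ℝ B, t ≤ specRad (K * Qᵀ * H⁻¹ * Q) := by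
    intro t ht
    rcases le_or_gt t 0 with ht0 | ht0
    · exact ht0.trans (specRad_nonneg _)
    have hswap : (K * Qᵀ * S⁻¹) * (S⁻¹ * Q) = K * Qᵀ * H⁻¹ * Q := by
      rw [← hSS, mul_inv_rev]; simp only [Matrix.mul_assoc]
    have hB' : B = (S⁻¹ * Q) * (K * Qᵀ * S⁻¹) := by simp only [B, Matrix.mul_assoc]
    rw [hB'] at ht
    exact (le_abs_self t).trans (abs_le_specRad (hswap ▸ mem_spectrum_mul_comm _ _ ht0.ne' ht))
  have := conjugate_le_conjugate_of_nonneg (le_algebraMap_of_spectrum_le hspec hB) hS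
  convert this using 1
  · rw [show S * B * S = (S * S⁻¹) * (Q * K * Qᵀ) * (S⁻¹ * S) by simp only [B, Matrix.mul_assoc],
      mul_nonsing_inv S hSdet, nonsing_inv_mul S hSdet, Matrix.one_mul, Matrix.mul_one]
  · rw [Algebra.algebraMap_eq_smul_one, Matrix.mul_smul, Matrix.smul_mul, Matrix.mul_one, hSS]

end Matrix

namespace ContinuousLinearMap

variable {m n : Type*} [Fintype m] [Fintype n] [DecidableEq m] [DecidableEq n]

theorem apply_eq_dotProduct (L : (n → ℝ) →L[ℝ] ℝ) (v : n → ℝ) :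
    L v = (fun i => L (Pi.single i 1)) ⬝ᵥ v := by
  conv_lhs => rw [← Finset.univ_sum_single v]
  simp only [map_sum, dotProduct]
  refine Finset.sum_congr rfl fun i _ => ?_
  rw [mul_comm, ← smul_eq_mul, ← map_smul, ← Pi.single_smul', smul_eq_mul, mul_one]

theorem apply_apply_eq_dotProduct_mulVec (D : (m → ℝ) →L[ℝ] (n → ℝ) →L[ℝ] ℝ)
    (M : Matrix m n ℝ) (hM : ∀ i j, D (Pi.single i 1) (Pi.single j 1) = M i j)
    (v : m → ℝ) (w : n → ℝ) : D v w = v ⬝ᵥ M *ᵥ w := by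
  rw [apply_eq_dotProduct (D v), dotProduct_mulVec]
  congr 1
  funext j
  rw [← flip_apply D, apply_eq_dotProduct, vecMul, dotProduct_comm]
  simp only [flip_apply, hM]

end ContinuousLinearMap

theorem stmt2 {d r : ℕ} (H : Matrix (Fin d) (Fin d) ℝ) (hH : H.PosDef)
    (x : Fin d → ℝ)
    (f : (Fin d → ℝ) → ℝ)
    (hf : ∀ z, f z = (1 / 2) * ((z - x) ⬝ᵥ H.mulVec (z - x)))
    (Θ : (Fin d → ℝ) → ℝ) (hΘ : ContDiff ℝ 2 Θ) (Θmax : ℝ)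
    (xstar : Fin d → ℝ) (μstar : ℝ) (hμ : 0 ≤ μstar)
    -- (i) stationarity: H (x⋆ − x) = μ⋆ ∇Θ(x⋆)
    (hstat : ∀ i, H.mulVec (xstar - x) i = μstar * fderiv ℝ Θ xstar (Pi.single i 1))
    -- (ii) feasibility
    (hfeas : Θ xstar = Θmax)
    -- (iii) low-rank factorization of the Hessian of Θ at x⋆
    (Q : Matrix (Fin d) (Fin r) ℝ) (K : Matrix (Fin r) (Fin r) ℝ) (hK : K.IsSymm)
    (hhess : ∀ i j, iteratedFDeriv ℝ 2 Θ xstar ![Pi.single i 1, Pi.single j 1]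
        = (Q * K * Qᵀ) i j)
    -- (iv) spectral inequality
    (hspec : μstar * specRad (K * Qᵀ * H⁻¹ * Q) < 1) :
    ∃ U ∈ nhds xstar, ∀ z ∈ U, Θ z = Θmax → z ≠ xstar → f xstar < f z := by
  set A := Q * K * Qᵀ
  set ρ := specRad (K * Qᵀ * H⁻¹ * Q)
  have hHsymm : H.IsSymm := by simpa using hH.isHermitian
  have hD1 : ∀ h, H *ᵥ (xstar - x) ⬝ᵥ h = μstar * fderiv ℝ Θ xstar h := fun h => by
    rw [(fderiv ℝ Θ xstar).apply_eq_dotProduct h, ← smul_eq_mul, ← smul_dotProduct]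
    exact congrArg (· ⬝ᵥ h) (funext hstat)
  have hD2 : ∀ h, fderiv ℝ (fderiv ℝ Θ) xstar h h = h ⬝ᵥ A *ᵥ h := fun h =>
    (fderiv ℝ (fderiv ℝ Θ) xstar).apply_apply_eq_dotProduct_mulVec A (fun i j => by
      simpa [iteratedFDeriv_two_apply] using hhess i j) h h
  obtain ⟨c, hc, hcoer⟩ := hH.exists_pos_mul_sq_norm_le
  have hgap : ∀ h, (1 - μstar * ρ) * c / 2 * ‖h‖ ^ 2
      ≤ (h ⬝ᵥ H *ᵥ h - μstar * (h ⬝ᵥ A *ᵥ h)) / 2 := fun h => by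
    have hAH := dotProduct_mulVec_le_of_le (hH.mul_mul_transpose_le_specRad_smul Q hK) h
    rw [smul_mulVec, dotProduct_smul, smul_eq_mul] at hAH
    linarith [mul_le_mul_of_nonneg_left hAH hμ,
      mul_le_mul_of_nonneg_left (hcoer h) (sub_pos.2 hspec).le]
  have hL : (fun h => (f (xstar + h) - μstar * Θ (xstar + h)) - (f xstar - μstar * Θ xstar)
      - (h ⬝ᵥ H *ᵥ h - μstar * (h ⬝ᵥ A *ᵥ h)) / 2) =o[𝓝 0] fun h => ‖h‖ ^ 2 := by
    refine ((hΘ.isLittleO_taylor_two xstar).const_mul_left (-μstar)).congr_left fun h => ?_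
    rw [hf, hf, add_sub_right_comm, hHsymm.add_dotProduct_mulVec_add, hD1, hD2]
    ring
  obtain ⟨U, hU, hmin⟩ := (eventually_lt_of_isLittleO_of_coercive
    (g := fun z => f z - μstar * Θ z) (div_pos (mul_pos (sub_pos.2 hspec) hc) two_pos)
    hgap hL).exists_mem
  refine ⟨U, hU, fun z hz hΘz hne => ?_⟩
  have := hmin z hz hne
  rw [hΘz, hfeas] at this
  linarith
end

section
/- Define f : ℝ³ → ℝ by f(a, b, φ) = ½(a² + b²) − ab·cos φ. Then the 3×3 Hessian matrix of f at any point (a, b, φ), with variables ordered (a, b, φ), equals Q K Qᵀ, where K = diag(1, 1, −1) and Q is the 3×3 matrix whose rows (indexed by a, b, φ respectively) are (1, 0, 0), (−cos φ, sin φ, 0), and (b·sin φ, a + b·cos φ, √(a² + b² + ab·cos φ)). (Note a² + b² + ab·cos φ ≥ 0 for all real a, b, φ, so the square root is well defined.) -/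
/-!
The gradient of `f` is `(a - b cos φ, b - a cos φ, a b sin φ)`, so its Hessian is
`[[1, -cos φ, b sin φ], [-cos φ, 1, a sin φ], [b sin φ, a sin φ, a b cos φ]]`.
Expanding `Q K Qᵀ` entrywise gives the same matrix, using only `sin² φ + cos² φ = 1` and
`(√(a² + b² + a b cos φ))² = a² + b² + a b cos φ`; the radicand is nonnegative because
`|a b cos φ| ≤ |a b| ≤ (a² + b²) / 2`.
-/

open Matrix ContinuousLinearMap Real

theorem sq_add_sq_add_mul_mul_nonneg (a b : ℝ) {c : ℝ} (hc : |c| ≤ 1) :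
    0 ≤ a ^ 2 + b ^ 2 + a * b * c := by
  have hab : |a * b * c| ≤ |a * b| := by
    rw [abs_mul]
    exact mul_le_of_le_one_right (abs_nonneg _) hc
  nlinarith [abs_le.mp hab, two_mul_le_add_sq |a| |b|, abs_mul a b, sq_abs a, sq_abs b]

section Hessian

variable {ι : Type*} [Fintype ι] [DecidableEq ι]

theorem iteratedFDeriv_two_apply_single_single {f : (ι → ℝ) → ℝ} {g : ι → (ι → ℝ) → ℝ}
    {H : Matrix ι ι ℝ} {p : ι → ℝ}
    (hf : ∀ x, HasFDerivAt f (∑ j, g j x • (proj j : (ι → ℝ) →L[ℝ] ℝ)) x)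
    (hg : ∀ j, HasFDerivAt (g j) (∑ i, H i j • (proj i : (ι → ℝ) →L[ℝ] ℝ)) p) (i j : ι) :
    iteratedFDeriv ℝ 2 f p ![Pi.single i 1, Pi.single j 1] = H i j := by
  have hDf : fderiv ℝ f = fun x => ∑ j, g j x • (proj j : (ι → ℝ) →L[ℝ] ℝ) :=
    funext fun x => (hf x).fderiv
  have hD2f : HasFDerivAt (fun x => ∑ j, g j x • (proj j : (ι → ℝ) →L[ℝ] ℝ))
      (∑ j, (∑ i, H i j • (proj i : (ι → ℝ) →L[ℝ] ℝ)).smulRight (proj j)) p :=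
    HasFDerivAt.fun_sum fun j _ => (hg j).smul_const (proj j : (ι → ℝ) →L[ℝ] ℝ)
  rw [iteratedFDeriv_two_apply, hDf, hD2f.fderiv]
  simp [Pi.single_apply]

end Hessian

noncomputable section

def overcurrent (v : Fin 3 → ℝ) : ℝ := 1 / 2 * (v 0 ^ 2 + v 1 ^ 2) - v 0 * v 1 * cos (v 2)

def overcurrentGrad : Fin 3 → (Fin 3 → ℝ) → ℝ :=
  ![fun v => v 0 - v 1 * cos (v 2), fun v => v 1 - v 0 * cos (v 2),
    fun v => v 0 * v 1 * sin (v 2)]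

def overcurrentHessian (p : Fin 3 → ℝ) : Matrix (Fin 3) (Fin 3) ℝ :=
  !![1, -cos (p 2), p 1 * sin (p 2);
    -cos (p 2), 1, p 0 * sin (p 2);
    p 1 * sin (p 2), p 0 * sin (p 2), p 0 * p 1 * cos (p 2)]

def overcurrentFactor (p : Fin 3 → ℝ) : Matrix (Fin 3) (Fin 3) ℝ :=
  !![1, 0, 0;
    -cos (p 2), sin (p 2), 0;
    p 1 * sin (p 2), p 0 + p 1 * cos (p 2), √(p 0 ^ 2 + p 1 ^ 2 + p 0 * p 1 * cos (p 2))]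

end

theorem hasFDerivAt_overcurrent (x : Fin 3 → ℝ) :
    HasFDerivAt overcurrent
      (∑ j, overcurrentGrad j x • (proj j : (Fin 3 → ℝ) →L[ℝ] ℝ)) x := by
  have h0 := hasFDerivAt_apply (𝕜 := ℝ) 0 x
  have h1 := hasFDerivAt_apply (𝕜 := ℝ) 1 x
  have hcos := (hasDerivAt_cos (x 2)).comp_hasFDerivAt x (hasFDerivAt_apply (𝕜 := ℝ) 2 x)
  refine ((((h0.pow 2).add (h1.pow 2)).const_mul (1 / 2)).sub
    ((h0.mul h1).mul hcos)).congr_fderiv ?_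
  ext v
  simp only [Fin.sum_univ_three, overcurrentGrad, cons_val', cons_val_zero, cons_val_one, cons_val,
    cons_val_fin_one, _root_.add_apply, _root_.sub_apply, _root_.smul_apply, Pi.mul_apply,
    Function.comp_apply, proj_apply, smul_eq_mul, nsmul_eq_mul]
  ring

theorem hasFDerivAt_overcurrentGrad (p : Fin 3 → ℝ) (j : Fin 3) :
    HasFDerivAt (overcurrentGrad j)
      (∑ i, overcurrentHessian p i j • (proj i : (Fin 3 → ℝ) →L[ℝ] ℝ)) p := by
  have h0 := hasFDerivAt_apply (𝕜 := ℝ) 0 p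
  have h1 := hasFDerivAt_apply (𝕜 := ℝ) 1 p
  have h2 := hasFDerivAt_apply (𝕜 := ℝ) 2 p
  have hcos := (hasDerivAt_cos (p 2)).comp_hasFDerivAt p h2
  have hsin := (hasDerivAt_sin (p 2)).comp_hasFDerivAt p h2
  fin_cases j <;>
    [refine (h0.sub (h1.mul hcos)).congr_fderiv ?_;
      refine (h1.sub (h0.mul hcos)).congr_fderiv ?_;
      refine ((h0.mul h1).mul hsin).congr_fderiv ?_] <;>
    ext v <;>
    simp only [Fin.sum_univ_three, overcurrentHessian, of_apply, cons_val', cons_val_zero,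
      cons_val_one, cons_val, cons_val_fin_one, Fin.zero_eta, Fin.mk_one, Fin.reduceFinMk,
      _root_.add_apply, _root_.sub_apply, _root_.smul_apply, Pi.mul_apply, Function.comp_apply,
      proj_apply, smul_eq_mul] <;>
    ring

theorem overcurrentFactor_mul_diagonal_mul_transpose (p : Fin 3 → ℝ) :
    overcurrentFactor p * diagonal ![1, 1, -1] * (overcurrentFactor p)ᵀ =
      overcurrentHessian p := by
  have hsqrt := sq_sqrt (sq_add_sq_add_mul_mul_nonneg (p 0) (p 1) (abs_cos_le_one (p 2)))
  have hpyth := sin_sq_add_cos_sq (p 2)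
  ext i j
  fin_cases i <;> fin_cases j <;>
    simp [overcurrentFactor, overcurrentHessian, mul_apply, vecMul_diagonal, Fin.sum_univ_three]
  · linear_combination hpyth
  · ring
  · ring
  · linear_combination p 1 ^ 2 * hpyth - hsqrt

theorem stmt4 (f : (Fin 3 → ℝ) → ℝ)
    (hf : ∀ v, f v = (1 / 2) * ((v 0) ^ 2 + (v 1) ^ 2) - v 0 * v 1 * Real.cos (v 2)) :
    (∀ a b φ : ℝ, 0 ≤ a ^ 2 + b ^ 2 + a * b * Real.cos φ) ∧
    ∀ p : Fin 3 → ℝ,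
      (Matrix.of fun i j : Fin 3 =>
          iteratedFDeriv ℝ 2 f p ![Pi.single i 1, Pi.single j 1])
        = (!![(1 : ℝ), 0, 0;
              -Real.cos (p 2), Real.sin (p 2), 0;
              p 1 * Real.sin (p 2), p 0 + p 1 * Real.cos (p 2),
                Real.sqrt ((p 0) ^ 2 + (p 1) ^ 2 + p 0 * p 1 * Real.cos (p 2))])
          * (Matrix.diagonal ![(1 : ℝ), 1, -1])
          * (!![(1 : ℝ), 0, 0;
              -Real.cos (p 2), Real.sin (p 2), 0;
              p 1 * Real.sin (p 2), p 0 + p 1 * Real.cos (p 2),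
                Real.sqrt ((p 0) ^ 2 + (p 1) ^ 2 + p 0 * p 1 * Real.cos (p 2))])ᵀ := by
  obtain rfl : f = overcurrent := funext hf
  refine ⟨fun a b φ => sq_add_sq_add_mul_mul_nonneg a b (abs_cos_le_one φ), fun p => ?_⟩
  refine .trans ?_ (overcurrentFactor_mul_diagonal_mul_transpose p).symm
  ext i j
  exact iteratedFDeriv_two_apply_single_single hasFDerivAt_overcurrent
    (hasFDerivAt_overcurrentGrad p) i j
end

section
/- Let H be a d×d real symmetric positive definite matrix, Q a d×r real matrix, K an r×r real matrix, μ ∈ ℝ, and u ∈ ℝᵈ. Set W = I_r − μ·K Qᵀ H⁻¹ Q and X = H − μ·Q K Qᵀ, and assume W is invertible. Then (Hu)ᵀ · adj(X) · (Hu) = det(H) · [ (uᵀHu)·det(W) + μ · uᵀ Q · adj(W) · K Qᵀ u ], where adj denotes the adjugate matrix. -/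
open Matrix

theorem stmt8 {d r : ℕ} (H : Matrix (Fin d) (Fin d) ℝ) (hH : H.PosDef)
    (Q : Matrix (Fin d) (Fin r) ℝ) (K : Matrix (Fin r) (Fin r) ℝ) (μ : ℝ)
    (u : Fin d → ℝ)
    (W : Matrix (Fin r) (Fin r) ℝ) (hW : W = 1 - μ • (K * Qᵀ * H⁻¹ * Q))
    (X : Matrix (Fin d) (Fin d) ℝ) (hX : X = H - μ • (Q * K * Qᵀ))
    (hWu : IsUnit W) :
    (H.mulVec u) ⬝ᵥ (X.adjugate.mulVec (H.mulVec u))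
      = H.det * ((u ⬝ᵥ H.mulVec u) * W.det
          + μ * (u ⬝ᵥ (Q * W.adjugate * K * Qᵀ).mulVec u)) := by
  have hHdet : IsUnit H.det := isUnit_iff_ne_zero.mpr (ne_of_gt hH.det_pos)
  have hWdet : IsUnit W.det := (Matrix.isUnit_iff_isUnit_det W).mp hWu
  have hH1 : H * H⁻¹ = 1 := Matrix.mul_nonsing_inv H hHdet
  have hH2 : H⁻¹ * H = 1 := Matrix.nonsing_inv_mul H hHdet
  have hW1 : W * W⁻¹ = 1 := Matrix.mul_nonsing_inv W hWdet
  have hW2 : W⁻¹ * W = 1 := Matrix.nonsing_inv_mul W hWdet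
  -- determinant of X
  have hXfac : X = H * (1 - (H⁻¹ * Q) * (μ • (K * Qᵀ))) := by
    rw [hX]
    simp only [Matrix.mul_sub, Matrix.mul_one, Matrix.mul_smul, ← Matrix.mul_assoc, hH1,
      Matrix.one_mul]
  have hdetX : X.det = H.det * W.det := by
    rw [hXfac, det_mul, det_one_sub_mul_comm, hW,
      show (μ • (K * Qᵀ)) * (H⁻¹ * Q) = μ • (K * Qᵀ * H⁻¹ * Q) by
        rw [Matrix.smul_mul]; simp only [Matrix.mul_assoc]]
  -- right inverse of X
  set Y : Matrix (Fin d) (Fin d) ℝ := H⁻¹ + μ • (H⁻¹ * Q * W⁻¹ * K * Qᵀ * H⁻¹) with hY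
  have hXY : X * Y = 1 := by
    have e1 : W * (W⁻¹ * (K * Qᵀ * H⁻¹)) = K * Qᵀ * H⁻¹ := by
      rw [← Matrix.mul_assoc, hW1, Matrix.one_mul]
    rw [hX, hY]
    have expand : (H - μ • (Q * K * Qᵀ)) * (H⁻¹ + μ • (H⁻¹ * Q * W⁻¹ * K * Qᵀ * H⁻¹))
        = H * H⁻¹ + μ • (H * H⁻¹ * Q * W⁻¹ * K * Qᵀ * H⁻¹)
          - (μ • (Q * K * Qᵀ * H⁻¹)
            + (μ * μ) • (Q * K * Qᵀ * H⁻¹ * Q * W⁻¹ * K * Qᵀ * H⁻¹)) := by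
      rw [Matrix.sub_mul, Matrix.mul_add, Matrix.mul_add]
      congr 1
      · congr 1
        rw [Matrix.mul_smul]
        congr 1
        simp only [Matrix.mul_assoc]
      · rw [Matrix.smul_mul, Matrix.smul_mul, Matrix.mul_smul, smul_smul]
        congr 2
        simp only [Matrix.mul_assoc]
    rw [expand, hH1, Matrix.one_mul]
    have key : μ • (Q * W⁻¹ * K * Qᵀ * H⁻¹)
        - (μ • (Q * K * Qᵀ * H⁻¹)
          + (μ * μ) • (Q * K * Qᵀ * H⁻¹ * Q * W⁻¹ * K * Qᵀ * H⁻¹)) = 0 := by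
      have : Q * ((1 - μ • (K * Qᵀ * H⁻¹ * Q)) * (W⁻¹ * (K * Qᵀ * H⁻¹)) - K * Qᵀ * H⁻¹) = 0 := by
        rw [← hW, e1, sub_self, Matrix.mul_zero]
      calc μ • (Q * W⁻¹ * K * Qᵀ * H⁻¹)
          - (μ • (Q * K * Qᵀ * H⁻¹)
            + (μ * μ) • (Q * K * Qᵀ * H⁻¹ * Q * W⁻¹ * K * Qᵀ * H⁻¹))
          = μ • (Q * ((1 - μ • (K * Qᵀ * H⁻¹ * Q)) * (W⁻¹ * (K * Qᵀ * H⁻¹)) - K * Qᵀ * H⁻¹)) := by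
            rw [Matrix.sub_mul, Matrix.one_mul, Matrix.mul_sub, Matrix.mul_sub, smul_sub, smul_sub]
            rw [Matrix.smul_mul, Matrix.mul_smul, smul_smul]
            simp only [Matrix.mul_assoc]
            abel
        _ = 0 := by rw [this, smul_zero]
    rw [add_sub_assoc, key, add_zero]
  have hXinv : X⁻¹ = Y := Matrix.inv_eq_right_inv hXY
  have hXdet_ne : IsUnit X.det := by
    rw [hdetX]; exact hHdet.mul hWdet
  -- adjugates
  have hadjX : X.adjugate = X.det • X⁻¹ := by
    have := Matrix.mul_adjugate X
    calc X.adjugate = 1 * X.adjugate := (Matrix.one_mul _).symm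
      _ = (X⁻¹ * X) * X.adjugate := by rw [Matrix.nonsing_inv_mul X hXdet_ne]
      _ = X⁻¹ * (X * X.adjugate) := by rw [Matrix.mul_assoc]
      _ = X⁻¹ * (X.det • 1) := by rw [this]
      _ = X.det • X⁻¹ := by rw [Matrix.mul_smul, Matrix.mul_one]
  have hadjW : W.adjugate = W.det • W⁻¹ := by
    have := Matrix.mul_adjugate W
    calc W.adjugate = 1 * W.adjugate := (Matrix.one_mul _).symm
      _ = (W⁻¹ * W) * W.adjugate := by rw [hW2]
      _ = W⁻¹ * (W * W.adjugate) := by rw [Matrix.mul_assoc]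
      _ = W⁻¹ * (W.det • 1) := by rw [this]
      _ = W.det • W⁻¹ := by rw [Matrix.mul_smul, Matrix.mul_one]
  -- H symmetric
  have hHsym : Hᵀ = H := hH.isHermitian.eq
  -- key dot product reduction
  have dotred : ∀ M : Matrix (Fin d) (Fin d) ℝ,
      (H.mulVec u) ⬝ᵥ (M.mulVec (H.mulVec u)) = u ⬝ᵥ ((H * M * H).mulVec u) := by
    intro M
    have hvm : u ᵥ* H = H *ᵥ u := by
      conv_lhs => rw [← hHsym]
      rw [Matrix.vecMul_transpose]
    rw [Matrix.dotProduct_mulVec u (H * M * H) u, ← Matrix.vecMul_vecMul, ← Matrix.vecMul_vecMul,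
      hvm, Matrix.dotProduct_mulVec (H *ᵥ u) M,
      Matrix.dotProduct_mulVec ((H *ᵥ u) ᵥ* M) H u]
  have hHXH : H * X⁻¹ * H = H + μ • (Q * W⁻¹ * K * Qᵀ) := by
    rw [hXinv, hY, Matrix.mul_add, Matrix.add_mul, hH1, Matrix.one_mul, Matrix.mul_smul,
      Matrix.smul_mul]
    congr 2
    calc H * (H⁻¹ * Q * W⁻¹ * K * Qᵀ * H⁻¹) * H
        = (H * H⁻¹) * (Q * W⁻¹ * K * Qᵀ) * (H⁻¹ * H) := by simp only [Matrix.mul_assoc]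
      _ = Q * W⁻¹ * K * Qᵀ := by rw [hH1, hH2, Matrix.one_mul, Matrix.mul_one]
  rw [hadjX, Matrix.smul_mulVec, dotProduct_smul, smul_eq_mul, dotred, hHXH, hdetX]
  have hQW : Q * W.adjugate * K * Qᵀ = W.det • (Q * W⁻¹ * K * Qᵀ) := by
    rw [hadjW, Matrix.mul_smul, Matrix.smul_mul, Matrix.smul_mul]
  rw [hQW]
  simp only [Matrix.add_mulVec, Matrix.smul_mulVec, dotProduct_add, dotProduct_smul,
    smul_eq_mul]
  ring
end
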